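/- arXiv:1508.04337 — 3 statements merged into one kernel-verified Lean document; each statement's English description precedes it below -/
import Mathlib

section
/- Let (u,τ) be a twice continuously differentiable solution of the p-system with τ > 0 on an open subset of ℝ×ℝ. Then at every point of the domain the gradient variables satisfy the Riccati equations α_t + c·α_x = k₁·(αβ − α²) and β_t − c·β_x = k₁·(αβ − β²), where k₁ = ((γ+1)K_c/(2(γ−1)))·η^{2/(γ−1)} with K_c = √(Kγ)·K_τ^{−(γ+1)/2} and K_τ = (2√(Kγ)/(γ−1))^{2/(γ−1)}. -/
open Real Set MeasureTheory

noncomputable section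

/-- Partial derivative in the spatial variable `x`. -/
def pdx (f : ℝ → ℝ → ℝ) (x t : ℝ) : ℝ := deriv (fun y => f y t) x

/-- Partial derivative in the time variable `t`. -/
def pdt (f : ℝ → ℝ → ℝ) (x t : ℝ) : ℝ := deriv (fun s => f x s) t

/-- The time strip `ℝ × [0, T)`, where `T` is a real number or `+∞`. -/
def strip (T : EReal) : Set (ℝ × ℝ) := {p : ℝ × ℝ | 0 ≤ p.2 ∧ (p.2 : EReal) < T}

/-- `η = (2√(Kγ)/(γ−1)) τ^{−(γ−1)/2}`. -/
def etaP (K γ : ℝ) (τ : ℝ → ℝ → ℝ) (x t : ℝ) : ℝ :=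
  2 * Real.sqrt (K * γ) / (γ - 1) * τ x t ^ (-(γ - 1) / 2)

/-- Gradient variable `α = s_x = u_x + η_x` for the p-system. -/
def alphaP (K γ : ℝ) (u τ : ℝ → ℝ → ℝ) (x t : ℝ) : ℝ :=
  pdx u x t + pdx (etaP K γ τ) x t

/-- Gradient variable `β = r_x = u_x − η_x` for the p-system. -/
def betaP (K γ : ℝ) (u τ : ℝ → ℝ → ℝ) (x t : ℝ) : ℝ :=
  pdx u x t - pdx (etaP K γ τ) x t

/-- The p-system `τ_t − u_x = 0`, `u_t + p_x = 0` with `p = K τ^{−γ}`, at the point `(x,t)`. -/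
def pSystem (K γ : ℝ) (u τ : ℝ → ℝ → ℝ) (x t : ℝ) : Prop :=
  pdt τ x t - pdx u x t = 0 ∧
  pdt u x t + pdx (fun y s => K * τ y s ^ (-γ)) x t = 0

/-- Riemann invariant `s = u + η`. -/
def sRi (K γ : ℝ) (u τ : ℝ → ℝ → ℝ) (x t : ℝ) : ℝ := u x t + etaP K γ τ x t

/-- Riemann invariant `r = u − η`. -/
def rRi (K γ : ℝ) (u τ : ℝ → ℝ → ℝ) (x t : ℝ) : ℝ := u x t - etaP K γ τ x t

/-- The Lagrangian wave speed `c = √(Kγ) τ^{−(γ+1)/2}`. -/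
def cP (K γ : ℝ) (τ : ℝ → ℝ → ℝ) (x t : ℝ) : ℝ :=
  Real.sqrt (K * γ) * τ x t ^ (-(γ + 1) / 2)

/-- The constant `K_τ = (2√(Kγ)/(γ−1))^{2/(γ−1)}`. -/
def KtauC (K γ : ℝ) : ℝ := (2 * Real.sqrt (K * γ) / (γ - 1)) ^ (2 / (γ - 1))

/-- The constant `K_c = √(Kγ) K_τ^{−(γ+1)/2}`. -/
def KcC (K γ : ℝ) : ℝ := Real.sqrt (K * γ) * KtauC K γ ^ (-(γ + 1) / 2)

/-- `k₁ = ((γ+1)K_c/(2(γ−1))) η^{2/(γ−1)}`. -/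
def k1P (K γ : ℝ) (τ : ℝ → ℝ → ℝ) (x t : ℝ) : ℝ :=
  (γ + 1) * KcC K γ / (2 * (γ - 1)) * etaP K γ τ x t ^ (2 / (γ - 1))

/-!
The Riemann invariants `s = u + η` and `r = u − η` are transported by the p-system,
`s_t + c s_x = 0` and `r_t − c r_x = 0`, because `η_x = −c τ_x`, `η_t = −c u_x` and
`p_x = −c² τ_x`. Differentiating a transport equation `S_t + c S_x = 0` in `x`, with the mixed
partials of the `C²` function `S` commuting, shows that `W = S_x` satisfies
`W_t + c W_x = −c_x W`. Finally `c_x = (γ+1)/(2τ) η_x = k₁ (α − β)`, since `k₁` reduces to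
`(γ+1)/(4τ)`, and this turns the two gradient equations into the Riccati equations.
-/

open Function Filter Topology

section PartialDerivatives

variable {f g : ℝ → ℝ → ℝ} {p : ℝ × ℝ}

theorem tendsto_slice_fst (p : ℝ × ℝ) : Tendsto (fun y => (y, p.2)) (𝓝 p.1) (𝓝 p) :=
  (continuous_id.prodMk continuous_const).tendsto p.1

theorem tendsto_slice_snd (p : ℝ × ℝ) : Tendsto (fun s => (p.1, s)) (𝓝 p.2) (𝓝 p) :=
  (continuous_const.prodMk continuous_id).tendsto p.2

theorem HasFDerivAt.hasDerivAt_slice_fst {L : ℝ × ℝ →L[ℝ] ℝ} (h : HasFDerivAt (uncurry f) L p) :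
    HasDerivAt (fun y => f y p.2) (L (1, 0)) p.1 :=
  h.comp_hasDerivAt_of_eq p.1 ((hasDerivAt_id p.1).prodMk (hasDerivAt_const p.1 p.2)) rfl

theorem HasFDerivAt.hasDerivAt_slice_snd {L : ℝ × ℝ →L[ℝ] ℝ} (h : HasFDerivAt (uncurry f) L p) :
    HasDerivAt (fun s => f p.1 s) (L (0, 1)) p.2 :=
  h.comp_hasDerivAt_of_eq p.2 ((hasDerivAt_const p.2 p.1).prodMk (hasDerivAt_id p.2)) rfl

theorem HasFDerivAt.pdx_eq {L : ℝ × ℝ →L[ℝ] ℝ} (h : HasFDerivAt (uncurry f) L p) :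
    pdx f p.1 p.2 = L (1, 0) :=
  h.hasDerivAt_slice_fst.deriv

theorem HasFDerivAt.pdt_eq {L : ℝ × ℝ →L[ℝ] ℝ} (h : HasFDerivAt (uncurry f) L p) :
    pdt f p.1 p.2 = L (0, 1) :=
  h.hasDerivAt_slice_snd.deriv

theorem DifferentiableAt.hasDerivAt_pdx (h : DifferentiableAt ℝ (uncurry f) p) :
    HasDerivAt (fun y => f y p.2) (pdx f p.1 p.2) p.1 :=
  h.hasFDerivAt.hasDerivAt_slice_fst.differentiableAt.hasDerivAt

theorem DifferentiableAt.hasDerivAt_pdt (h : DifferentiableAt ℝ (uncurry f) p) :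
    HasDerivAt (fun s => f p.1 s) (pdt f p.1 p.2) p.2 :=
  h.hasFDerivAt.hasDerivAt_slice_snd.differentiableAt.hasDerivAt

theorem pdx_congr (h : uncurry f =ᶠ[𝓝 p] uncurry g) : pdx f p.1 p.2 = pdx g p.1 p.2 :=
  (h.comp_tendsto (tendsto_slice_fst p)).deriv_eq

theorem pdt_congr (h : uncurry f =ᶠ[𝓝 p] uncurry g) : pdt f p.1 p.2 = pdt g p.1 p.2 :=
  (h.comp_tendsto (tendsto_slice_snd p)).deriv_eq

theorem ContDiffAt.eventually_uncurry_pdx_eq {n : WithTop ℕ∞} (hf : ContDiffAt ℝ n (uncurry f) p)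
    (hn : 1 ≤ n) : uncurry (pdx f) =ᶠ[𝓝 p] fun q => fderiv ℝ (uncurry f) q (1, 0) :=
  ((hf.of_le hn).eventually (by simp)).mono fun _ hq =>
    (hq.differentiableAt one_ne_zero).hasFDerivAt.pdx_eq

theorem ContDiffAt.eventually_uncurry_pdt_eq {n : WithTop ℕ∞} (hf : ContDiffAt ℝ n (uncurry f) p)
    (hn : 1 ≤ n) : uncurry (pdt f) =ᶠ[𝓝 p] fun q => fderiv ℝ (uncurry f) q (0, 1) :=
  ((hf.of_le hn).eventually (by simp)).mono fun _ hq =>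
    (hq.differentiableAt one_ne_zero).hasFDerivAt.pdt_eq

theorem ContDiffAt.uncurry_pdx {m n : WithTop ℕ∞} (hf : ContDiffAt ℝ n (uncurry f) p)
    (hmn : m + 1 ≤ n) : ContDiffAt ℝ m (uncurry (pdx f)) p :=
  ((hf.fderiv_right hmn).clm_apply contDiffAt_const).congr_of_eventuallyEq
    (hf.eventually_uncurry_pdx_eq (le_add_self.trans hmn))

theorem ContDiffAt.uncurry_pdt {m n : WithTop ℕ∞} (hf : ContDiffAt ℝ n (uncurry f) p)
    (hmn : m + 1 ≤ n) : ContDiffAt ℝ m (uncurry (pdt f)) p :=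
  ((hf.fderiv_right hmn).clm_apply contDiffAt_const).congr_of_eventuallyEq
    (hf.eventually_uncurry_pdt_eq (le_add_self.trans hmn))

theorem ContDiffAt.pdt_pdx_eq_pdx_pdt (hf : ContDiffAt ℝ 2 (uncurry f) p) :
    pdt (pdx f) p.1 p.2 = pdx (pdt f) p.1 p.2 := by
  set F := uncurry f
  have hD : HasFDerivAt (fderiv ℝ F) (fderiv ℝ (fderiv ℝ F) p) p :=
    ((hf.fderiv_right (m := 1) (by norm_num)).differentiableAt one_ne_zero).hasFDerivAt
  have hD_apply (v : ℝ × ℝ) : HasFDerivAt (uncurry fun y s => fderiv ℝ F (y, s) v)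
      ((ContinuousLinearMap.apply ℝ ℝ v).comp (fderiv ℝ (fderiv ℝ F) p)) p :=
    (ContinuousLinearMap.apply ℝ ℝ v).hasFDerivAt.comp p hD
  calc pdt (pdx f) p.1 p.2
      = pdt (fun y s => fderiv ℝ F (y, s) (1, 0)) p.1 p.2 :=
        pdt_congr (hf.eventually_uncurry_pdx_eq (by norm_num))
    _ = fderiv ℝ (fderiv ℝ F) p (0, 1) (1, 0) := (hD_apply (1, 0)).pdt_eq
    _ = fderiv ℝ (fderiv ℝ F) p (1, 0) (0, 1) := hf.isSymmSndFDerivAt (by simp) _ _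
    _ = pdx (fun y s => fderiv ℝ F (y, s) (0, 1)) p.1 p.2 := (hD_apply (0, 1)).pdx_eq.symm
    _ = pdx (pdt f) p.1 p.2 := (pdx_congr (hf.eventually_uncurry_pdt_eq (by norm_num))).symm

end PartialDerivatives

theorem transport_gradient {S c : ℝ → ℝ → ℝ} {p : ℝ × ℝ} (hS : ContDiffAt ℝ 2 (uncurry S) p)
    (hc : DifferentiableAt ℝ (fun y => c y p.2) p.1)
    (htr : ∀ᶠ q in 𝓝 p, pdt S q.1 q.2 + c q.1 q.2 * pdx S q.1 q.2 = 0) :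
    pdt (pdx S) p.1 p.2 + c p.1 p.2 * pdx (pdx S) p.1 p.2 = -(pdx c p.1 p.2 * pdx S p.1 p.2) := by
  have hSt := ((hS.uncurry_pdt (m := 1) (by norm_num)).differentiableAt one_ne_zero).hasDerivAt_pdx
  have hSx := ((hS.uncurry_pdx (m := 1) (by norm_num)).differentiableAt one_ne_zero).hasDerivAt_pdx
  have hcx : HasDerivAt (fun y => c y p.2) (pdx c p.1 p.2) p.1 := hc.hasDerivAt
  have hderiv := hSt.add (hcx.mul hSx)
  have hzero : HasDerivAt (fun y => pdt S y p.2 + c y p.2 * pdx S y p.2) 0 p.1 :=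
    (hasDerivAt_const p.1 0).congr_of_eventuallyEq ((tendsto_slice_fst p).eventually htr)
  rw [hS.pdt_pdx_eq_pdx_pdt]
  linear_combination hderiv.unique hzero

theorem transport_gradient_on {S c W : ℝ → ℝ → ℝ} {Ω : Set (ℝ × ℝ)} (hΩ : IsOpen Ω)
    (hS : ContDiffOn ℝ 2 (uncurry S) Ω) (hc : ∀ p ∈ Ω, DifferentiableAt ℝ (fun y => c y p.2) p.1)
    (htr : ∀ p ∈ Ω, pdt S p.1 p.2 + c p.1 p.2 * pdx S p.1 p.2 = 0)
    (hW : ∀ p ∈ Ω, W p.1 p.2 = pdx S p.1 p.2) (p : ℝ × ℝ) (hp : p ∈ Ω) :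
    pdt W p.1 p.2 + c p.1 p.2 * pdx W p.1 p.2 = -(pdx c p.1 p.2 * W p.1 p.2) := by
  have hWS : uncurry W =ᶠ[𝓝 p] uncurry (pdx S) := eventually_of_mem (hΩ.mem_nhds hp) hW
  rw [pdt_congr hWS, pdx_congr hWS, hW p hp]
  exact transport_gradient (hS.contDiffAt (hΩ.mem_nhds hp)) (hc p hp)
    (eventually_of_mem (hΩ.mem_nhds hp) htr)

section PSystem

variable {K γ : ℝ} {u τ : ℝ → ℝ → ℝ} {p : ℝ × ℝ}

theorem KcC_mul_KtauC (hK : 0 < K) (hγ : 1 < γ) : KcC K γ * KtauC K γ = (γ - 1) / 2 := by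
  have hsqrt : 0 < √(K * γ) := Real.sqrt_pos.2 (mul_pos hK (one_pos.trans hγ))
  have hA : 0 < 2 * √(K * γ) / (γ - 1) := div_pos (by positivity) (sub_pos.2 hγ)
  have hexp : 2 / (γ - 1) * (-(γ + 1) / 2 + 1) = -1 := by
    field_simp [(sub_pos.2 hγ).ne']
    ring
  have hKτ : 0 < KtauC K γ := Real.rpow_pos_of_pos hA _
  rw [KcC, mul_assoc, ← Real.rpow_add_one hKτ.ne', KtauC,
    ← Real.rpow_mul hA.le, hexp, Real.rpow_neg_one]
  field_simp [hsqrt.ne']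

theorem k1P_eq (hK : 0 < K) (hγ : 1 < γ) (x t : ℝ) (hpos : 0 < τ x t) :
    k1P K γ τ x t = (γ + 1) / (4 * τ x t) := by
  have hA : 0 ≤ 2 * √(K * γ) / (γ - 1) := div_nonneg (by positivity) (sub_pos.2 hγ).le
  have hη : etaP K γ τ x t ^ (2 / (γ - 1)) = KtauC K γ / τ x t := by
    have hexp : -(γ - 1) / 2 * (2 / (γ - 1)) = -1 := by
      field_simp [(sub_pos.2 hγ).ne']
    rw [etaP, Real.mul_rpow hA (Real.rpow_nonneg hpos.le _), ← Real.rpow_mul hpos.le, hexp,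
      Real.rpow_neg_one, KtauC]
    exact (div_eq_mul_inv _ _).symm
  rw [k1P, hη]
  field_simp [(sub_pos.2 hγ).ne']
  linear_combination 4 * KcC_mul_KtauC hK hγ

theorem hasDerivAt_etaP_comp {g : ℝ → ℝ} {g' y : ℝ} (hγ : γ ≠ 1) (hg : HasDerivAt g g' y)
    (hpos : 0 < g y) :
    HasDerivAt (fun z => 2 * √(K * γ) / (γ - 1) * g z ^ (-(γ - 1) / 2))
      (-(√(K * γ) * g y ^ (-(γ + 1) / 2) * g')) y := by
  refine ((hg.rpow_const (p := -(γ - 1) / 2) (Or.inl hpos.ne')).const_mul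
    (2 * √(K * γ) / (γ - 1))).congr_deriv ?_
  rw [show -(γ - 1) / 2 - 1 = -(γ + 1) / 2 by ring]
  field_simp [sub_ne_zero.2 hγ]

theorem hasDerivAt_etaP_fst (hγ : γ ≠ 1) (hτ : DifferentiableAt ℝ (uncurry τ) p)
    (hpos : 0 < τ p.1 p.2) :
    HasDerivAt (fun y => etaP K γ τ y p.2) (-(cP K γ τ p.1 p.2 * pdx τ p.1 p.2)) p.1 :=
  hasDerivAt_etaP_comp hγ hτ.hasDerivAt_pdx hpos

theorem hasDerivAt_etaP_snd (hγ : γ ≠ 1) (hτ : DifferentiableAt ℝ (uncurry τ) p)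
    (hpos : 0 < τ p.1 p.2) :
    HasDerivAt (fun s => etaP K γ τ p.1 s) (-(cP K γ τ p.1 p.2 * pdt τ p.1 p.2)) p.2 :=
  hasDerivAt_etaP_comp hγ hτ.hasDerivAt_pdt hpos

theorem hasDerivAt_cP_fst (hγ : γ ≠ 1) (hτ : DifferentiableAt ℝ (uncurry τ) p)
    (hpos : 0 < τ p.1 p.2) :
    HasDerivAt (fun y => cP K γ τ y p.2)
      ((γ + 1) / (2 * τ p.1 p.2) * pdx (etaP K γ τ) p.1 p.2) p.1 := by
  have hηx : pdx (etaP K γ τ) p.1 p.2 = _ := (hasDerivAt_etaP_fst hγ hτ hpos).deriv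
  refine ((hτ.hasDerivAt_pdx.rpow_const (p := -(γ + 1) / 2) (Or.inl hpos.ne')).const_mul
    (√(K * γ))).congr_deriv ?_
  rw [hηx, cP, Real.rpow_sub_one hpos.ne']
  field_simp

theorem hasDerivAt_pressure_fst (hKγ : 0 ≤ K * γ) (hτ : DifferentiableAt ℝ (uncurry τ) p)
    (hpos : 0 < τ p.1 p.2) :
    HasDerivAt (fun y => K * τ y p.2 ^ (-γ)) (-(cP K γ τ p.1 p.2 ^ 2 * pdx τ p.1 p.2)) p.1 := by
  refine ((hτ.hasDerivAt_pdx.rpow_const (p := -γ) (Or.inl hpos.ne')).const_mul K).congr_deriv ?_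
  rw [cP, mul_pow, Real.sq_sqrt hKγ, ← Real.rpow_natCast, ← Real.rpow_mul hpos.le,
    show -(γ + 1) / 2 * ((2 : ℕ) : ℝ) = -γ - 1 by push_cast; ring]
  ring

theorem pdx_sRi (hγ : γ ≠ 1) (hu : DifferentiableAt ℝ (uncurry u) p)
    (hτ : DifferentiableAt ℝ (uncurry τ) p) (hpos : 0 < τ p.1 p.2) :
    pdx (sRi K γ u τ) p.1 p.2 = alphaP K γ u τ p.1 p.2 :=
  (hu.hasDerivAt_pdx.add (hasDerivAt_etaP_fst hγ hτ hpos).differentiableAt.hasDerivAt).deriv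

theorem pdx_rRi (hγ : γ ≠ 1) (hu : DifferentiableAt ℝ (uncurry u) p)
    (hτ : DifferentiableAt ℝ (uncurry τ) p) (hpos : 0 < τ p.1 p.2) :
    pdx (rRi K γ u τ) p.1 p.2 = betaP K γ u τ p.1 p.2 :=
  (hu.hasDerivAt_pdx.sub (hasDerivAt_etaP_fst hγ hτ hpos).differentiableAt.hasDerivAt).deriv

theorem pdt_sRi (hγ : γ ≠ 1) (hu : DifferentiableAt ℝ (uncurry u) p)
    (hτ : DifferentiableAt ℝ (uncurry τ) p) (hpos : 0 < τ p.1 p.2) :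
    pdt (sRi K γ u τ) p.1 p.2 = pdt u p.1 p.2 - cP K γ τ p.1 p.2 * pdt τ p.1 p.2 :=
  (hu.hasDerivAt_pdt.add (hasDerivAt_etaP_snd hγ hτ hpos)).deriv.trans (by ring)

theorem pdt_rRi (hγ : γ ≠ 1) (hu : DifferentiableAt ℝ (uncurry u) p)
    (hτ : DifferentiableAt ℝ (uncurry τ) p) (hpos : 0 < τ p.1 p.2) :
    pdt (rRi K γ u τ) p.1 p.2 = pdt u p.1 p.2 + cP K γ τ p.1 p.2 * pdt τ p.1 p.2 :=
  (hu.hasDerivAt_pdt.sub (hasDerivAt_etaP_snd hγ hτ hpos)).deriv.trans (by ring)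

theorem pSystem.transport_sRi (hKγ : 0 ≤ K * γ) (hγ : γ ≠ 1)
    (hu : DifferentiableAt ℝ (uncurry u) p) (hτ : DifferentiableAt ℝ (uncurry τ) p)
    (hpos : 0 < τ p.1 p.2) (h : pSystem K γ u τ p.1 p.2) :
    pdt (sRi K γ u τ) p.1 p.2 + cP K γ τ p.1 p.2 * pdx (sRi K γ u τ) p.1 p.2 = 0 := by
  obtain ⟨hmass, hmom⟩ := h
  have hpx : pdx (fun y s => K * τ y s ^ (-γ)) p.1 p.2 = _ :=
    (hasDerivAt_pressure_fst hKγ hτ hpos).deriv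
  have hηx : pdx (etaP K γ τ) p.1 p.2 = _ := (hasDerivAt_etaP_fst hγ hτ hpos).deriv
  rw [pdt_sRi hγ hu hτ hpos, pdx_sRi hγ hu hτ hpos, alphaP, hηx]
  linear_combination hmom - hpx - cP K γ τ p.1 p.2 * hmass

theorem pSystem.transport_rRi (hKγ : 0 ≤ K * γ) (hγ : γ ≠ 1)
    (hu : DifferentiableAt ℝ (uncurry u) p) (hτ : DifferentiableAt ℝ (uncurry τ) p)
    (hpos : 0 < τ p.1 p.2) (h : pSystem K γ u τ p.1 p.2) :
    pdt (rRi K γ u τ) p.1 p.2 - cP K γ τ p.1 p.2 * pdx (rRi K γ u τ) p.1 p.2 = 0 := by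
  obtain ⟨hmass, hmom⟩ := h
  have hpx : pdx (fun y s => K * τ y s ^ (-γ)) p.1 p.2 = _ :=
    (hasDerivAt_pressure_fst hKγ hτ hpos).deriv
  have hηx : pdx (etaP K γ τ) p.1 p.2 = _ := (hasDerivAt_etaP_fst hγ hτ hpos).deriv
  rw [pdt_rRi hγ hu hτ hpos, pdx_rRi hγ hu hτ hpos, betaP, hηx]
  linear_combination hmom - hpx + cP K γ τ p.1 p.2 * hmass

theorem ContDiffOn.uncurry_etaP {n : WithTop ℕ∞} {Ω : Set (ℝ × ℝ)}
    (hτ : ContDiffOn ℝ n (uncurry τ) Ω) (hpos : ∀ p ∈ Ω, 0 < τ p.1 p.2) :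
    ContDiffOn ℝ n (uncurry (etaP K γ τ)) Ω :=
  contDiffOn_const.mul (hτ.rpow_const_of_ne fun p hp => (hpos p hp).ne')

end PSystem

/-- Lax's Riccati equations along characteristics for the p-system. -/
theorem psystem_riccati_equations
    (K γ : ℝ) (hK : 0 < K) (hγ : 1 < γ)
    (Ω : Set (ℝ × ℝ)) (hΩ : IsOpen Ω)
    (u τ : ℝ → ℝ → ℝ)
    (hu_reg : ContDiffOn ℝ 2 (fun p : ℝ × ℝ => u p.1 p.2) Ω)
    (hτ_reg : ContDiffOn ℝ 2 (fun p : ℝ × ℝ => τ p.1 p.2) Ω)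
    (hτ_pos : ∀ p ∈ Ω, 0 < τ p.1 p.2)
    (hpde : ∀ p ∈ Ω, pSystem K γ u τ p.1 p.2) :
    ∀ p ∈ Ω,
      pdt (alphaP K γ u τ) p.1 p.2 + cP K γ τ p.1 p.2 * pdx (alphaP K γ u τ) p.1 p.2 =
        k1P K γ τ p.1 p.2 *
          (alphaP K γ u τ p.1 p.2 * betaP K γ u τ p.1 p.2 - (alphaP K γ u τ p.1 p.2) ^ 2) ∧
      pdt (betaP K γ u τ) p.1 p.2 - cP K γ τ p.1 p.2 * pdx (betaP K γ u τ) p.1 p.2 =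
        k1P K γ τ p.1 p.2 *
          (alphaP K γ u τ p.1 p.2 * betaP K γ u τ p.1 p.2 - (betaP K γ u τ p.1 p.2) ^ 2) := by
  intro p hp
  have hγ1 : γ ≠ 1 := hγ.ne'
  have hKγ : 0 ≤ K * γ := by positivity
  have hu q (hq : q ∈ Ω) : DifferentiableAt ℝ (uncurry u) q :=
    (hu_reg.contDiffAt (hΩ.mem_nhds hq)).differentiableAt two_ne_zero
  have hτ q (hq : q ∈ Ω) : DifferentiableAt ℝ (uncurry τ) q :=
    (hτ_reg.contDiffAt (hΩ.mem_nhds hq)).differentiableAt two_ne_zero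
  have hc q (hq : q ∈ Ω) := hasDerivAt_cP_fst (K := K) hγ1 (hτ q hq) (hτ_pos q hq)
  have hα := transport_gradient_on (S := sRi K γ u τ) hΩ
    (hu_reg.add (hτ_reg.uncurry_etaP hτ_pos)) (fun q hq => (hc q hq).differentiableAt)
    (fun q hq => (hpde q hq).transport_sRi hKγ hγ1 (hu q hq) (hτ q hq) (hτ_pos q hq))
    (fun q hq => (pdx_sRi hγ1 (hu q hq) (hτ q hq) (hτ_pos q hq)).symm) p hp
  have hβ := transport_gradient_on (S := rRi K γ u τ) (c := fun y s => -cP K γ τ y s) hΩ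
    (hu_reg.sub (hτ_reg.uncurry_etaP hτ_pos)) (fun q hq => (hc q hq).differentiableAt.neg)
    (fun q hq => by
      linear_combination (hpde q hq).transport_rRi hKγ hγ1 (hu q hq) (hτ q hq) (hτ_pos q hq))
    (fun q hq => (pdx_rRi hγ1 (hu q hq) (hτ q hq) (hτ_pos q hq)).symm) p hp
  rw [show pdx (cP K γ τ) p.1 p.2 = _ from (hc p hp).deriv] at hα
  rw [show pdx (fun y s => -cP K γ τ y s) p.1 p.2 = _ from (hc p hp).neg.deriv] at hβ
  have hαβ : alphaP K γ u τ p.1 p.2 - betaP K γ u τ p.1 p.2 = 2 * pdx (etaP K γ τ) p.1 p.2 := by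
    rw [alphaP, betaP]; ring
  rw [k1P_eq hK hγ p.1 p.2 (hτ_pos p hp)]
  constructor
  · linear_combination hα + (γ + 1) / (4 * τ p.1 p.2) * alphaP K γ u τ p.1 p.2 * hαβ
  · linear_combination hβ - (γ + 1) / (4 * τ p.1 p.2) * betaP K γ u τ p.1 p.2 * hαβ
end
end

section
/- Let M > 0 and K₁ ≥ 0 be real constants and let a < b be real numbers. Suppose y : [a,b] → ℝ is continuous on [a,b], differentiable on [a,b), and satisfies 0 < y(t) < M and y′(t) ≤ K₁·(M·y(t) − y(t)²) for all t ∈ [a,b). Then for all t ∈ [a,b), (1/M)·log( y(t)/(M − y(t)) ) ≤ (1/M)·log( y(a)/(M − y(a)) ) + K₁·(t − a); in particular, y(b) < M. -/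
open Real Set

/-- Riccati-type ODE comparison estimate. If `0 < y < M` on `[a,b)` and
`y′ ≤ K₁(My − y²)`, then `(1/M) log(y/(M−y))` grows at most linearly, and `y(b) < M`. -/
theorem riccati_ode_comparison
    (M K₁ a b : ℝ) (hM : 0 < M) (hK₁ : 0 ≤ K₁) (hab : a < b)
    (y y' : ℝ → ℝ)
    (hcont : ContinuousOn y (Set.Icc a b))
    (hderiv : ∀ t ∈ Set.Ico a b, HasDerivWithinAt y (y' t) (Set.Ici t) t)
    (hy_pos : ∀ t ∈ Set.Ico a b, 0 < y t)
    (hy_lt : ∀ t ∈ Set.Ico a b, y t < M)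
    (hineq : ∀ t ∈ Set.Ico a b, y' t ≤ K₁ * (M * y t - (y t) ^ 2)) :
    (∀ t ∈ Set.Ico a b,
      1 / M * Real.log (y t / (M - y t)) ≤
        1 / M * Real.log (y a / (M - y a)) + K₁ * (t - a)) ∧
    y b < M := by
  -- Work with g s = (1/M) (log (y s) - log (M - y s)), which agrees with the
  -- quantity in the statement on points where 0 < y < M.
  set g : ℝ → ℝ := fun s => 1 / M * (Real.log (y s) - Real.log (M - y s)) with hg
  have key : ∀ t ∈ Set.Ico a b, g t ≤ g a + K₁ * (t - a) := by
    intro t ht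
    obtain ⟨hat, htb⟩ := ht
    have hsub : Set.Icc a t ⊆ Set.Ico a b := fun s hs => ⟨hs.1, lt_of_le_of_lt hs.2 htb⟩
    have hsub' : Set.Ico a t ⊆ Set.Ico a b := fun s hs => ⟨hs.1, hs.2.trans htb⟩
    have hcont' : ContinuousOn y (Set.Icc a t) :=
      hcont.mono (fun s hs => ⟨hs.1, hs.2.trans htb.le⟩)
    have hgcont : ContinuousOn g (Set.Icc a t) := by
      apply ContinuousOn.mul continuousOn_const
      apply ContinuousOn.sub
      · exact ContinuousOn.log hcont' (fun s hs => (hy_pos s (hsub hs)).ne')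
      · exact ContinuousOn.log (continuousOn_const.sub hcont')
          (fun s hs => (sub_pos.mpr (hy_lt s (hsub hs))).ne')
    have hgderiv : ∀ x ∈ Set.Ico a t,
        HasDerivWithinAt g (1 / M * (y' x / y x - (-(y' x)) / (M - y x))) (Set.Ici x) x := by
      intro x hx
      have hx' := hsub' hx
      have h1 : HasDerivWithinAt (fun s => Real.log (y s)) (y' x / y x) (Set.Ici x) x :=
        (hderiv x hx').log (hy_pos x hx').ne'
      have h2 : HasDerivWithinAt (fun s => Real.log (M - y s)) ((-(y' x)) / (M - y x))
          (Set.Ici x) x := by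
        have := ((hasDerivWithinAt_const x (Set.Ici x) M).sub (hderiv x hx')).log
          (sub_pos.mpr (hy_lt x hx')).ne'
        simpa using this
      exact (h1.sub h2).const_mul (1 / M)
    have hBderiv : ∀ x ∈ Set.Ico a t,
        HasDerivWithinAt (fun s => g a + K₁ * (s - a)) K₁ (Set.Ici x) x := by
      intro x hx
      simpa using ((((hasDerivWithinAt_id x (Set.Ici x)).sub_const a).const_mul K₁).const_add
        (g a))
    have hbound : ∀ x ∈ Set.Ico a t,
        1 / M * (y' x / y x - (-(y' x)) / (M - y x)) ≤ K₁ := by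
      intro x hx
      have hx' := hsub' hx
      have hyp := hy_pos x hx'
      have hym := sub_pos.mpr (hy_lt x hx')
      have h := hineq x hx'
      have hprod : 0 < y x * (M - y x) := mul_pos hyp hym
      have heq : 1 / M * (y' x / y x - (-(y' x)) / (M - y x))
          = y' x / (y x * (M - y x)) := by
        field_simp
        ring
      rw [heq, div_le_iff₀ hprod]
      calc y' x ≤ K₁ * (M * y x - (y x) ^ 2) := h
        _ = K₁ * (y x * (M - y x)) := by ring
    have := image_le_of_deriv_right_le_deriv_boundary hgcont hgderiv
      (by simp) (Continuous.continuousOn (by continuity)) hBderiv hbound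
      (Set.right_mem_Icc.mpr hat)
    exact this
  have hglog : ∀ t ∈ Set.Ico a b,
      1 / M * Real.log (y t / (M - y t)) = g t := by
    intro t ht
    rw [hg]
    rw [Real.log_div (hy_pos t ht).ne' (sub_pos.mpr (hy_lt t ht)).ne']
  have part1 : ∀ t ∈ Set.Ico a b,
      1 / M * Real.log (y t / (M - y t)) ≤
        1 / M * Real.log (y a / (M - y a)) + K₁ * (t - a) := by
    intro t ht
    rw [hglog t ht, hglog a ⟨le_refl a, hab⟩]
    exact key t ht
  refine ⟨part1, ?_⟩
  -- Now show y b < M.  From part1, y s / (M - y s) is bounded on [a,b).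
  set E : ℝ := Real.exp (M * (g a + K₁ * (b - a))) with hE
  have hEpos : 0 < E := Real.exp_pos _
  set c : ℝ := E * M / (1 + E) with hc
  have hcM : c < M := by
    rw [hc, div_lt_iff₀ (by positivity)]
    nlinarith
  have hbnd : ∀ s ∈ Set.Ico a b, y s ≤ c := by
    intro s hs
    have h1 := key s hs
    have h2 : g s ≤ g a + K₁ * (b - a) := by
      have : K₁ * (s - a) ≤ K₁ * (b - a) := by
        apply mul_le_mul_of_nonneg_left (by linarith [hs.2]) hK₁
      linarith
    have hyp := hy_pos s hs
    have hym := sub_pos.mpr (hy_lt s hs)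
    have h3 : Real.log (y s / (M - y s)) ≤ M * (g a + K₁ * (b - a)) := by
      have : g s = 1 / M * Real.log (y s / (M - y s)) := (hglog s hs).symm
      rw [this] at h2
      calc Real.log (y s / (M - y s))
          = M * (1 / M * Real.log (y s / (M - y s))) := by field_simp
        _ ≤ M * (g a + K₁ * (b - a)) := mul_le_mul_of_nonneg_left h2 hM.le
    have h4 : y s / (M - y s) ≤ E := by
      rw [hE]
      calc y s / (M - y s) = Real.exp (Real.log (y s / (M - y s))) :=
            (Real.exp_log (by positivity)).symm
        _ ≤ Real.exp (M * (g a + K₁ * (b - a))) := Real.exp_le_exp.mpr h3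
    have h5 : y s ≤ E * (M - y s) := by
      rwa [div_le_iff₀ hym] at h4
    rw [hc, le_div_iff₀ (by positivity)]
    nlinarith
  have htend : Filter.Tendsto y (nhdsWithin b (Set.Ico a b)) (nhds (y b)) := by
    have := (hcont b (Set.right_mem_Icc.mpr hab.le)).mono Set.Ico_subset_Icc_self
    exact this
  have hne : (nhdsWithin b (Set.Ico a b)).NeBot := right_nhdsWithin_Ico_neBot hab
  have hyb : y b ≤ c :=
    le_of_tendsto htend (Filter.eventually_of_mem self_mem_nhdsWithin hbnd)
  exact lt_of_le_of_lt hyb hcM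
end

section
/- Let (u,τ,S) be a classical (C¹) solution of the full compressible Euler equations τ_t − u_x = 0, u_t + p_x = 0, S_t = 0 (p = K e^{S/c_v} τ^{−γ}) on an open subset of ℝ×ℝ with τ > 0. Then at every point of the domain: η_t + c·η_x = −K_c·η^{(γ+1)/(γ−1)}·β − ((γ−1)/γ)·K_c·η^{2γ/(γ−1)}·m_x and η_t − c·η_x = −K_c·η^{(γ+1)/(γ−1)}·α + ((γ−1)/γ)·K_c·η^{2γ/(γ−1)}·m_x. -/
open Real Set MeasureTheory

noncomputable section

/-- `m = e^{S/(2c_v)}`. -/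
def mF (cv : ℝ) (S : ℝ → ℝ → ℝ) (x t : ℝ) : ℝ := Real.exp (S x t / (2 * cv))

/-- The ideal polytropic pressure `p = K e^{S/c_v} τ^{−γ}`. -/
def pF (K cv γ : ℝ) (τ S : ℝ → ℝ → ℝ) (x t : ℝ) : ℝ :=
  K * Real.exp (S x t / cv) * τ x t ^ (-γ)

/-- The full compressible Euler equations `τ_t − u_x = 0`, `u_t + p_x = 0`, `S_t = 0`
with `p = K e^{S/c_v} τ^{−γ}`, at the point `(x,t)`. -/
def fullEuler (K cv γ : ℝ) (u τ S : ℝ → ℝ → ℝ) (x t : ℝ) : Prop :=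
  pdt τ x t - pdx u x t = 0 ∧
  pdt u x t + pdx (pF K cv γ τ S) x t = 0 ∧
  pdt S x t = 0

/-- Wave speed `c = K_c m η^{(γ+1)/(γ−1)}` for the full Euler equations. -/
def cF (K cv γ : ℝ) (τ S : ℝ → ℝ → ℝ) (x t : ℝ) : ℝ :=
  KcC K γ * mF cv S x t * etaP K γ τ x t ^ ((γ + 1) / (γ - 1))

/-- Gradient variable `α = u_x + m η_x + ((γ−1)/γ) m_x η` for the full Euler equations. -/
def alphaF (K cv γ : ℝ) (u τ S : ℝ → ℝ → ℝ) (x t : ℝ) : ℝ :=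
  pdx u x t + mF cv S x t * pdx (etaP K γ τ) x t
    + (γ - 1) / γ * pdx (mF cv S) x t * etaP K γ τ x t

/-- Gradient variable `β = u_x − m η_x − ((γ−1)/γ) m_x η` for the full Euler equations. -/
def betaF (K cv γ : ℝ) (u τ S : ℝ → ℝ → ℝ) (x t : ℝ) : ℝ :=
  pdx u x t - mF cv S x t * pdx (etaP K γ τ) x t
    - (γ - 1) / γ * pdx (mF cv S) x t * etaP K γ τ x t

/-- `k₂ = ((γ−1)/(γ(γ+1))) η m_x`. -/
def k2F (K cv γ : ℝ) (τ S : ℝ → ℝ → ℝ) (x t : ℝ) : ℝ :=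
  (γ - 1) / (γ * (γ + 1)) * etaP K γ τ x t * pdx (mF cv S) x t

/-- Weighted gradient variable `α_ε = η^{2ε/(γ−1)} α`. -/
def aeps (K cv γ ε : ℝ) (u τ S : ℝ → ℝ → ℝ) (x t : ℝ) : ℝ :=
  etaP K γ τ x t ^ (2 * ε / (γ - 1)) * alphaF K cv γ u τ S x t

/-- Weighted gradient variable `β_ε = η^{2ε/(γ−1)} β`. -/
def beps (K cv γ ε : ℝ) (u τ S : ℝ → ℝ → ℝ) (x t : ℝ) : ℝ :=
  etaP K γ τ x t ^ (2 * ε / (γ - 1)) * betaF K cv γ u τ S x t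

/-- `k_{1ε} = ((γ+1)K_c/(2(γ−1))) η^{(2/(γ−1))(1−ε)}`. -/
def k1e (K γ ε : ℝ) (τ : ℝ → ℝ → ℝ) (x t : ℝ) : ℝ :=
  (γ + 1) * KcC K γ / (2 * (γ - 1)) * etaP K γ τ x t ^ (2 / (γ - 1) * (1 - ε))

/-- `k_{2ε} = ((γ−1)/(γ(γ+1))) η^{1+2ε/(γ−1)} m_x`. -/
def k2e (K cv γ ε : ℝ) (τ S : ℝ → ℝ → ℝ) (x t : ℝ) : ℝ :=
  (γ - 1) / (γ * (γ + 1)) * etaP K γ τ x t ^ (1 + 2 * ε / (γ - 1)) * pdx (mF cv S) x t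

/-!
By the chain rule the mass equation `τ_t = u_x` gives `η_t = -c_p u_x`, where
`c_p = √(Kγ) τ^{-(γ+1)/2}` is the Lagrangian sound speed of the isentropic gas, and the constant
`K_c` is chosen exactly so that `K_c η^{(γ+1)/(γ-1)} = c_p`; hence `c = m c_p`. Substituting these,
both identities become linear identities in `u_x`, `η_x` and `m_x`.
-/

theorem hasDerivAt_pdt_of_differentiableAt {f : ℝ → ℝ → ℝ} {x t : ℝ}
    (hf : DifferentiableAt ℝ (fun q : ℝ × ℝ => f q.1 q.2) (x, t)) :
    HasDerivAt (fun s => f x s) (pdt f x t) t :=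
  (hf.comp t ((differentiableAt_const x).prodMk differentiableAt_id)).hasDerivAt

theorem hasDerivAt_etaP_time {K γ : ℝ} (hγ : γ ≠ 1) {τ : ℝ → ℝ → ℝ} {x t d : ℝ}
    (hτ : τ x t ≠ 0) (hτt : HasDerivAt (fun s => τ x s) d t) :
    HasDerivAt (fun s => etaP K γ τ x s) (-cP K γ τ x t * d) t := by
  have hγ1 : γ - 1 ≠ 0 := sub_ne_zero.mpr hγ
  refine ((hτt.rpow_const (p := -(γ - 1) / 2) (Or.inl hτ)).const_mul
    (2 * Real.sqrt (K * γ) / (γ - 1))).congr_deriv ?_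
  rw [cP, show -(γ - 1) / 2 - 1 = -(γ + 1) / 2 by ring]
  field_simp

theorem etaP_coeff_pos {K γ : ℝ} (hK : 0 < K) (hγ : 1 < γ) :
    0 < 2 * Real.sqrt (K * γ) / (γ - 1) :=
  div_pos (mul_pos two_pos (Real.sqrt_pos.mpr (mul_pos hK (by linarith)))) (sub_pos.mpr hγ)

theorem etaP_pos {K γ : ℝ} (hK : 0 < K) (hγ : 1 < γ) {τ : ℝ → ℝ → ℝ} {x t : ℝ}
    (hτ : 0 < τ x t) : 0 < etaP K γ τ x t :=
  mul_pos (etaP_coeff_pos hK hγ) (Real.rpow_pos_of_pos hτ _)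

theorem KcC_mul_etaP_rpow {K γ : ℝ} (hK : 0 < K) (hγ : 1 < γ) {τ : ℝ → ℝ → ℝ} {x t : ℝ}
    (hτ : 0 ≤ τ x t) :
    KcC K γ * etaP K γ τ x t ^ ((γ + 1) / (γ - 1)) = cP K γ τ x t := by
  have hγ1 : γ - 1 ≠ 0 := (sub_pos.mpr hγ).ne'
  have hA := etaP_coeff_pos hK hγ
  unfold KcC KtauC etaP cP
  rw [← Real.rpow_mul hA.le, Real.mul_rpow hA.le (Real.rpow_nonneg hτ _),
    ← Real.rpow_mul hτ,
    show 2 / (γ - 1) * (-(γ + 1) / 2) = -((γ + 1) / (γ - 1)) by field_simp,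
    show -(γ - 1) / 2 * ((γ + 1) / (γ - 1)) = -(γ + 1) / 2 by field_simp,
    Real.rpow_neg hA.le, mul_assoc, inv_mul_cancel_left₀ (Real.rpow_pos_of_pos hA _).ne']

theorem fullEuler_eta_characteristic_derivatives_general
    (K cv γ : ℝ) (hK : 0 < K) (hγ : 1 < γ)
    (Ω : Set (ℝ × ℝ)) (hΩ : IsOpen Ω)
    (u τ S : ℝ → ℝ → ℝ)
    (hτ_reg : ContDiffOn ℝ 1 (fun p : ℝ × ℝ => τ p.1 p.2) Ω)
    (hτ_pos : ∀ p ∈ Ω, 0 < τ p.1 p.2)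
    (hpde : ∀ p ∈ Ω, fullEuler K cv γ u τ S p.1 p.2) :
    ∀ p ∈ Ω,
      pdt (etaP K γ τ) p.1 p.2 + cF K cv γ τ S p.1 p.2 * pdx (etaP K γ τ) p.1 p.2 =
        -(KcC K γ) * etaP K γ τ p.1 p.2 ^ ((γ + 1) / (γ - 1)) * betaF K cv γ u τ S p.1 p.2 -
          (γ - 1) / γ * KcC K γ * etaP K γ τ p.1 p.2 ^ (2 * γ / (γ - 1)) *
            pdx (mF cv S) p.1 p.2 ∧
      pdt (etaP K γ τ) p.1 p.2 - cF K cv γ τ S p.1 p.2 * pdx (etaP K γ τ) p.1 p.2 =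
        -(KcC K γ) * etaP K γ τ p.1 p.2 ^ ((γ + 1) / (γ - 1)) * alphaF K cv γ u τ S p.1 p.2 +
          (γ - 1) / γ * KcC K γ * etaP K γ τ p.1 p.2 ^ (2 * γ / (γ - 1)) *
            pdx (mF cv S) p.1 p.2 := by
  rintro ⟨x, t⟩ hp
  have hτ : 0 < τ x t := hτ_pos (x, t) hp
  have hτt : HasDerivAt (fun s => τ x s) (pdt τ x t) t := hasDerivAt_pdt_of_differentiableAt
    ((hτ_reg.differentiableOn one_ne_zero).differentiableAt (hΩ.mem_nhds hp))
  have hmass : pdt τ x t = pdx u x t := sub_eq_zero.mp (hpde (x, t) hp).1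
  have hηt : pdt (etaP K γ τ) x t = -cP K γ τ x t * pdx u x t := by
    rw [← hmass]
    exact (hasDerivAt_etaP_time hγ.ne' hτ.ne' hτt).deriv
  have hη : etaP K γ τ x t ≠ 0 := (etaP_pos hK hγ hτ).ne'
  have hpow : etaP K γ τ x t ^ (2 * γ / (γ - 1))
      = etaP K γ τ x t ^ ((γ + 1) / (γ - 1)) * etaP K γ τ x t := by
    rw [← Real.rpow_add_one hη]
    congr 1
    field_simp [(sub_pos.mpr hγ).ne']
    ring
  have hc := KcC_mul_etaP_rpow hK hγ hτ.le
  constructor <;>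
  · simp only [cF, betaF, alphaF]
    rw [hpow, hηt]
    linear_combination pdx u x t * hc

/-- directional derivatives of `η` along characteristics for full Euler. -/
theorem fullEuler_eta_characteristic_derivatives
    (K cv γ : ℝ) (hK : 0 < K) (hcv : 0 < cv) (hγ : 1 < γ)
    (Ω : Set (ℝ × ℝ)) (hΩ : IsOpen Ω)
    (u τ S : ℝ → ℝ → ℝ)
    (hu_reg : ContDiffOn ℝ 1 (fun p : ℝ × ℝ => u p.1 p.2) Ω)
    (hτ_reg : ContDiffOn ℝ 1 (fun p : ℝ × ℝ => τ p.1 p.2) Ω)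
    (hS_reg : ContDiffOn ℝ 1 (fun p : ℝ × ℝ => S p.1 p.2) Ω)
    (hτ_pos : ∀ p ∈ Ω, 0 < τ p.1 p.2)
    (hpde : ∀ p ∈ Ω, fullEuler K cv γ u τ S p.1 p.2) :
    ∀ p ∈ Ω,
      pdt (etaP K γ τ) p.1 p.2 + cF K cv γ τ S p.1 p.2 * pdx (etaP K γ τ) p.1 p.2 =
        -(KcC K γ) * etaP K γ τ p.1 p.2 ^ ((γ + 1) / (γ - 1)) * betaF K cv γ u τ S p.1 p.2 -
          (γ - 1) / γ * KcC K γ * etaP K γ τ p.1 p.2 ^ (2 * γ / (γ - 1)) *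
            pdx (mF cv S) p.1 p.2 ∧
      pdt (etaP K γ τ) p.1 p.2 - cF K cv γ τ S p.1 p.2 * pdx (etaP K γ τ) p.1 p.2 =
        -(KcC K γ) * etaP K γ τ p.1 p.2 ^ ((γ + 1) / (γ - 1)) * alphaF K cv γ u τ S p.1 p.2 +
          (γ - 1) / γ * KcC K γ * etaP K γ τ p.1 p.2 ^ (2 * γ / (γ - 1)) *
            pdx (mF cv S) p.1 p.2 :=
  fullEuler_eta_characteristic_derivatives_general K cv γ hK hγ Ω hΩ u τ S hτ_reg hτ_pos hpde
end
end
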